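/- The conditional expectation E(Z φ(ζ)/Φ(ζ) | U = 1) satisfies (1/(σ Φ(μ₂))) ∫_{-∞}^{∞} z(y) φ(ζ(y)) φ(z(y)) dy = −μ₂ ρ √(1 − ρ²) φ(μ₂)/Φ(μ₂). -/

import Mathlib

open MeasureTheory Set

/-- Standard normal density. -/
noncomputable def phi (t : ℝ) : ℝ := Real.exp (-(t ^ 2) / 2) / Real.sqrt (2 * Real.pi)

/-- Standard normal cumulative distribution function. -/
noncomputable def Phi (x : ℝ) : ℝ := ∫ t in Set.Iic x, phi t

/-!
Completing the square in the exponent gives `φ(ζ) φ(z) = φ(μ₂) φ((z + μ₂ ρ) / s)` with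
`s = √(1 - ρ²)`. After the substitution `y = μ₁ + σ z` the integral becomes
`σ φ(μ₂) ∫ t φ((t + μ₂ ρ) / s) dt`, and the last integral is `s` times the mean `-μ₂ ρ` of the
normal law with density `φ((t + μ₂ ρ) / s) / s`.
-/

theorem integral_eq_zero_of_odd {f : ℝ → ℝ} (hf : ∀ x, f (-x) = -f x) : ∫ x, f x = 0 := by
  have h := integral_neg_eq_self f volume
  simp only [hf, integral_neg] at h
  linarith

theorem integral_comp_sub_div {E : Type*} [NormedAddCommGroup E] [NormedSpace ℝ E]
    (f : ℝ → E) (c : ℝ) {s : ℝ} (hs : 0 < s) :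
    ∫ t, f ((t - c) / s) = s • ∫ t, f t := by
  rw [integral_sub_right_eq_self (fun t => f (t / s)) c, Measure.integral_comp_div,
    abs_of_pos hs]

theorem phi_eq_exp : phi = fun t => (Real.sqrt (2 * Real.pi))⁻¹ * Real.exp (-(1 / 2) * t ^ 2) := by
  ext t
  rw [phi, div_eq_inv_mul]
  ring_nf

theorem integrable_phi : Integrable phi := by
  rw [phi_eq_exp]
  exact (integrable_exp_neg_mul_sq (by norm_num)).const_mul _

theorem integrable_mul_phi : Integrable fun t => t * phi t := by
  simp_rw [phi_eq_exp, mul_left_comm _ (Real.sqrt _)⁻¹]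
  exact (integrable_mul_exp_neg_mul_sq (by norm_num)).const_mul _

theorem integral_phi : ∫ t, phi t = 1 := by
  rw [phi_eq_exp, integral_const_mul, integral_gaussian, div_div_eq_mul_div, div_one,
    mul_comm Real.pi]
  exact inv_mul_cancel₀ (by positivity)

theorem integral_mul_phi : ∫ t, t * phi t = 0 :=
  integral_eq_zero_of_odd (f := fun t => t * phi t) fun t => by simp [phi]

theorem integral_mul_phi_comp_add_div (c : ℝ) {s : ℝ} (hs : 0 < s) :
    ∫ t, t * phi ((t + c) / s) = -(c * s) := by
  have h : ∀ t, t * phi ((t + c) / s) = (s * ((t - -c) / s) - c) * phi ((t - -c) / s) := by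
    intro t
    rw [sub_neg_eq_add]
    field_simp
    ring
  simp_rw [h]
  rw [integral_comp_sub_div (fun u => (s * u - c) * phi u) (-c) hs]
  simp_rw [sub_mul, mul_assoc]
  rw [integral_sub (integrable_mul_phi.const_mul s) (integrable_phi.const_mul c),
    integral_const_mul, integral_const_mul, integral_mul_phi, integral_phi, smul_eq_mul]
  ring

theorem phi_mul_phi (a x : ℝ) {ρ : ℝ} (hρ : ρ ^ 2 < 1) :
    phi ((a + ρ * x) / Real.sqrt (1 - ρ ^ 2)) * phi x
      = phi a * phi ((x + a * ρ) / Real.sqrt (1 - ρ ^ 2)) := by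
  have hs : Real.sqrt (1 - ρ ^ 2) ^ 2 = 1 - ρ ^ 2 := Real.sq_sqrt (by linarith)
  have hs0 : 1 - ρ ^ 2 ≠ 0 := by linarith
  simp only [phi, div_mul_div_comm, ← Real.exp_add, div_pow, hs]
  congr 2
  field_simp
  ring

theorem GH_z_hazard_conditional_mean (μ₁ μ₂ σ ρ : ℝ) (hσ : 0 < σ) (hρ₁ : -1 < ρ) (hρ₂ : ρ < 1)
    (z ζ : ℝ → ℝ)
    (hz : ∀ y, z y = (y - μ₁) / σ)
    (hζ : ∀ y, ζ y = (μ₂ + ρ * z y) / Real.sqrt (1 - ρ ^ 2)) :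
    (1 / (σ * Phi μ₂)) * ∫ y : ℝ, z y * phi (ζ y) * phi (z y)
      = -(μ₂ * ρ * Real.sqrt (1 - ρ ^ 2) * phi μ₂ / Phi μ₂) := by
  have hρ : ρ ^ 2 < 1 := by nlinarith
  have hs : 0 < Real.sqrt (1 - ρ ^ 2) := Real.sqrt_pos.mpr (by linarith)
  set g : ℝ → ℝ := fun t => t * phi ((t + μ₂ * ρ) / Real.sqrt (1 - ρ ^ 2)) with hg
  have hpt : ∀ y, z y * phi (ζ y) * phi (z y) = phi μ₂ * g ((y - μ₁) / σ) := by
    intro y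
    rw [mul_assoc, hζ, phi_mul_phi _ _ hρ, hz, hg]
    ring
  calc (1 / (σ * Phi μ₂)) * ∫ y : ℝ, z y * phi (ζ y) * phi (z y)
      = (1 / (σ * Phi μ₂)) * (phi μ₂ * (σ * -(μ₂ * ρ * Real.sqrt (1 - ρ ^ 2)))) := by
        rw [integral_congr_ae (ae_of_all _ hpt), integral_const_mul, integral_comp_sub_div g μ₁ hσ,
          hg, integral_mul_phi_comp_add_div _ hs, smul_eq_mul]
    _ = -(μ₂ * ρ * Real.sqrt (1 - ρ ^ 2) * phi μ₂ / Phi μ₂) := by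
        field_simp
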